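/- arXiv:1402.7008 — 6 statements merged into one kernel-verified Lean document; each statement's English description precedes it below -/
import Mathlib

section
/- In the identification-space framework, the maximality condition holds if and only if both of the following hold: (i) for all q, p with R q p, the domain D q p equals { z ∈ V q | ι q z ∈ ι p '' (V p) }, i.e. D q p consists exactly of those z ∈ V q whose class in M lies in the image of ι p; and (ii) for every p, the map ι p : V p → M is injective. -/
/-- One step of identification: a point `z` in the chart at `q` is sent by the coordinate
change `φ q p` (defined on the domain `D q p`, available when `R q p`) to a point `w` in the
chart at `p`. -/
def Step {P : Type*} {V : P → Type*} (R : P → P → Prop)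
    (D : ∀ q p : P, Set (V q)) (φ : ∀ q p : P, V q → V p) :
    (Σ p, V p) → (Σ p, V p) → Prop :=
  fun a b => R a.1 b.1 ∧ a.2 ∈ D a.1 b.1 ∧ φ a.1 b.1 a.2 = b.2

/-- The identification space: the quotient of `Σ p, V p` by the equivalence relation
generated by `Step`. -/
def IdSpace {P : Type*} (V : P → Type*) (R : P → P → Prop)
    (D : ∀ q p : P, Set (V q)) (φ : ∀ q p : P, V q → V p) : Type _ :=
  Quot (Step R D φ)

/-- The natural map from a chart into the identification space. -/
def iota {P : Type*} {V : P → Type*} (R : P → P → Prop)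
    (D : ∀ q p : P, Set (V q)) (φ : ∀ q p : P, V q → V p) (p : P) (z : V p) :
    IdSpace V R D φ :=
  Quot.mk _ ⟨p, z⟩

/-- The maximality condition: whenever `R q p` and the classes of `z ∈ V q` and `w ∈ V p` are
identified in the identification space, then `z` lies in the domain `D q p` and is mapped to
`w` by the coordinate change. -/
def Maximality {P : Type*} {V : P → Type*} (R : P → P → Prop)
    (D : ∀ q p : P, Set (V q)) (φ : ∀ q p : P, V q → V p) : Prop :=
  ∀ q p : P, R q p → ∀ (z : V q) (w : V p),
    Relation.EqvGen (Step R D φ) ⟨q, z⟩ ⟨p, w⟩ → z ∈ D q p ∧ φ q p z = w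

/-- The maximality condition holds iff (i) each domain `D q p` (for `R q p`) consists exactly
of the points of `V q` whose class lies in the image of `ι p`, and (ii) each `ι p` is
injective. -/
theorem stmt_1 {P : Type*} {V : P → Type*}
    (R : P → P → Prop) (hrefl : ∀ p, R p p)
    (D : ∀ q p : P, Set (V q)) (φ : ∀ q p : P, V q → V p) :
    Maximality R D φ ↔
      ((∀ q p : P, R q p →
          D q p = {z : V q | iota R D φ q z ∈ Set.range (iota R D φ p)}) ∧
        ∀ p : P, Function.Injective (iota R D φ p)) := by
  have key : ∀ (q p : P) (z : V q) (w : V p),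
      iota R D φ q z = iota R D φ p w ↔
        Relation.EqvGen (Step R D φ) ⟨q, z⟩ ⟨p, w⟩ := by
    intro q p z w
    exact Quot.eq
  constructor
  · intro hmax
    constructor
    · intro q p hqp
      ext z
      constructor
      · intro hz
        refine ⟨φ q p z, ?_⟩
        exact ((key q p z (φ q p z)).mpr (Relation.EqvGen.rel _ _ ⟨hqp, hz, rfl⟩)).symm
      · rintro ⟨w, hw⟩
        exact (hmax q p hqp z w ((key q p z w).mp hw.symm)).1
    · intro p z w h
      have h1 := hmax p p (hrefl p) z w ((key p p z w).mp h)
      have h2 := hmax p p (hrefl p) z z (Relation.EqvGen.refl _)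
      exact h2.2.symm.trans h1.2
  · rintro ⟨hD, hinj⟩ q p hqp z w h
    have hz : z ∈ D q p := by
      rw [hD q p hqp]
      exact ⟨w, ((key q p z w).mpr h).symm⟩
    refine ⟨hz, hinj p ?_⟩
    have h1 : iota R D φ q z = iota R D φ p (φ q p z) :=
      Quot.sound ⟨hqp, hz, rfl⟩
    exact h1.symm.trans ((key q p z w).mpr h)
end

section
/- In the identification-space framework, assume the maximality condition holds. Let r, q, p ∈ P with R r q, R r p and R q p. Then for every z ∈ (D r q) ∩ (D r p), the point φ r q z lies in D q p and φ q p (φ r q z) = φ r p z; in particular (D r p) ∩ (D r q) ∩ (φ r q)⁻¹(D q p) = (D r p) ∩ (D r q). -/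
/-- Under the maximality condition, coordinate changes compose wherever defined: for
`R r q`, `R r p`, `R q p` and `z ∈ D r q ∩ D r p`, the point `φ r q z` lies in `D q p` and
`φ q p (φ r q z) = φ r p z`; in particular the triple-intersection domain is all of
`D r p ∩ D r q`. -/
theorem stmt_2 {P : Type*} {V : P → Type*}
    (R : P → P → Prop) (hrefl : ∀ p, R p p)
    (D : ∀ q p : P, Set (V q)) (φ : ∀ q p : P, V q → V p)
    (hmax : Maximality R D φ)
    (r q p : P) (hrq : R r q) (hrp : R r p) (hqp : R q p) :
    (∀ z ∈ D r q ∩ D r p, φ r q z ∈ D q p ∧ φ q p (φ r q z) = φ r p z) ∧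
      D r p ∩ D r q ∩ (φ r q) ⁻¹' (D q p) = D r p ∩ D r q := by
  have key : ∀ z ∈ D r q ∩ D r p, φ r q z ∈ D q p ∧ φ q p (φ r q z) = φ r p z := by
    intro z hz
    have h1 : Relation.EqvGen (Step R D φ) ⟨r, z⟩ ⟨q, φ r q z⟩ :=
      Relation.EqvGen.rel _ _ ⟨hrq, hz.1, rfl⟩
    have h2 : Relation.EqvGen (Step R D φ) ⟨r, z⟩ ⟨p, φ r p z⟩ :=
      Relation.EqvGen.rel _ _ ⟨hrp, hz.2, rfl⟩
    exact hmax q p hqp _ _ (Relation.EqvGen.trans _ _ _ (Relation.EqvGen.symm _ _ h1) h2)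
  refine ⟨key, ?_⟩
  ext z
  constructor
  · rintro ⟨h, _⟩; exact h
  · rintro ⟨h1, h2⟩; exact ⟨⟨h1, h2⟩, (key z ⟨h2, h1⟩).1⟩
end

section
/- Let X be a compact metric space and for every p ∈ X let N p be an open subset of X with p ∈ N p. Then there exist a finite subset S ⊆ X and a function r : S → ℝ with r x > 0 for all x ∈ S, such that: (a) for every x ∈ S the open ball B(x, r x) is contained in N x; (b) the half-radius balls B(x, r x / 2), x ∈ S, cover X; and (c) for all x, y ∈ S, if B(y, r y / 2) ∩ B(x, r x / 2) ≠ ∅ then y ∈ N x or x ∈ N y. -/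
/-- On a compact metric space, given for each point `p` an open neighborhood `N p` of `p`,
there are a finite set `S` of centers and radii `r x > 0` with `B(x, r x) ⊆ N x`, such that
the half-radius balls cover `X` and any two centers with intersecting half-radius balls are
comparable: one lies in the prescribed neighborhood of the other. -/
theorem stmt_3 {X : Type*} [MetricSpace X] [CompactSpace X]
    (N : X → Set X) (hopen : ∀ p, IsOpen (N p)) (hmem : ∀ p, p ∈ N p) :
    ∃ (S : Finset X) (r : X → ℝ),
      (∀ x ∈ S, 0 < r x) ∧
      (∀ x ∈ S, Metric.ball x (r x) ⊆ N x) ∧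
      (⋃ x ∈ S, Metric.ball x (r x / 2)) = Set.univ ∧
      (∀ x ∈ S, ∀ y ∈ S,
        (Metric.ball y (r y / 2) ∩ Metric.ball x (r x / 2)).Nonempty →
          y ∈ N x ∨ x ∈ N y) := by
  have h : ∀ p : X, ∃ ε > 0, Metric.ball p ε ⊆ N p := fun p =>
    Metric.isOpen_iff.1 (hopen p) p (hmem p)
  choose r hr hball using h
  -- cover by half balls
  have hcov : (Set.univ : Set X) ⊆ ⋃ p : X, Metric.ball p (r p / 2) := by
    intro x _
    exact Set.mem_iUnion.2 ⟨x, Metric.mem_ball_self (by linarith [hr x])⟩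
  obtain ⟨S, hS⟩ := IsCompact.elim_finite_subcover isCompact_univ
    (fun p => Metric.ball p (r p / 2)) (fun p => Metric.isOpen_ball) hcov
  refine ⟨S, r, fun x _ => hr x, fun x _ => hball x, ?_, ?_⟩
  · apply Set.eq_univ_of_univ_subset
    exact hS
  · intro x _ y _ ⟨z, hzy, hzx⟩
    simp only [Metric.mem_ball] at hzy hzx
    have hd : dist x y < r x / 2 + r y / 2 := by
      calc dist x y ≤ dist x z + dist z y := dist_triangle x z y
        _ = dist z x + dist z y := by rw [dist_comm x z]
        _ < r x / 2 + r y / 2 := by linarith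
    rcases le_total (r x) (r y) with h' | h'
    · right
      exact hball y (by rw [Metric.mem_ball]; linarith)
    · left
      exact hball x (by rw [Metric.mem_ball, dist_comm y x]; linarith)
end

section
/- Let X be a compact metric space, I a finite index type, and (U i)_{i ∈ I} a family of open sets covering X. Then there exists a family (V i)_{i ∈ I} of open sets such that: (a) the closure of V i is contained in U i for every i; (b) the V i cover X; (c) for all i, j ∈ I, U i ∩ U j ≠ ∅ if and only if V i ∩ V j ≠ ∅; and (d) for all i, j ∈ I, if V i ∩ V j = ∅ then (closure of V i) ∩ (closure of V j) = ∅. -/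
/-- A finite open cover of a compact metric space admits a precompact shrinking `V i` with
`closure (V i) ⊆ U i`, still covering, such that the intersection pattern is preserved
(`U i` meets `U j` iff `V i` meets `V j`) and disjoint `V i`, `V j` have disjoint closures. -/
theorem stmt_4 {X : Type*} [MetricSpace X] [CompactSpace X] {I : Type*} [Finite I]
    (U : I → Set X) (hopen : ∀ i, IsOpen (U i)) (hcover : ⋃ i, U i = Set.univ) :
    ∃ V : I → Set X,
      (∀ i, IsOpen (V i)) ∧
      (∀ i, closure (V i) ⊆ U i) ∧
      (⋃ i, V i = Set.univ) ∧
      (∀ i j, (U i ∩ U j).Nonempty ↔ (V i ∩ V j).Nonempty) ∧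
      (∀ i j, V i ∩ V j = ∅ → closure (V i) ∩ closure (V j) = ∅) := by
  classical
  rcases isEmpty_or_nonempty X with hX | hX
  · refine ⟨U, hopen, fun i => ?_, hcover, fun i j => Iff.rfl,
      fun i j _ => Set.eq_empty_of_isEmpty _⟩
    rw [Set.eq_empty_of_isEmpty (closure (U i))]
    exact Set.empty_subset _
  have hI : Nonempty I := by
    obtain ⟨x⟩ := hX
    have hx : x ∈ ⋃ i, U i := hcover ▸ Set.mem_univ x
    obtain ⟨i, -⟩ := Set.mem_iUnion.1 hx
    exact ⟨i⟩
  have : Fintype I := Fintype.ofFinite I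
  set f : I → X → ℝ := fun i x => if (U i)ᶜ = ∅ then 1 else Metric.infDist x (U i)ᶜ with hf
  have fcont : ∀ i, Continuous (f i) := by
    intro i
    by_cases h : (U i)ᶜ = ∅
    · simp only [hf, h, if_true]
      exact continuous_const
    · simp only [hf, h, if_false]
      exact Metric.continuous_infDist_pt _
  have fnonneg : ∀ i x, 0 ≤ f i x := by
    intro i x
    by_cases h : (U i)ᶜ = ∅ <;> simp only [hf, h, if_true, if_false]
    · exact zero_le_one
    · exact Metric.infDist_nonneg
  have fpos : ∀ i x, x ∈ U i → 0 < f i x := by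
    intro i x hx
    by_cases h : (U i)ᶜ = ∅ <;> simp only [hf, h, if_true, if_false]
    · exact one_pos
    · exact ((hopen i).isClosed_compl.notMem_iff_infDist_pos (Set.nonempty_iff_ne_empty.2 h)).1
        (by simpa using hx)
  have fmem : ∀ i x, 0 < f i x → x ∈ U i := by
    intro i x hx
    by_cases h : (U i)ᶜ = ∅
    · have := Set.compl_empty_iff.1 h
      rw [this]; trivial
    · by_contra hxm
      have h0 : Metric.infDist x (U i)ᶜ = 0 := Metric.infDist_zero_of_mem (by simpa using hxm)
      simp only [hf, h, if_false] at hx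
      rw [h0] at hx
      exact lt_irrefl _ hx
  -- the sum function and its minimum
  set S : X → ℝ := fun x => ∑ i, f i x with hS
  have Scont : Continuous S := continuous_finset_sum _ fun i _ => fcont i
  obtain ⟨x₀, -, hx₀'⟩ := isCompact_univ.exists_isMinOn (Set.univ_nonempty) Scont.continuousOn
  have hx₀ : ∀ y ∈ Set.univ, S x₀ ≤ S y := fun y hy => hx₀' hy
  set δ : ℝ := S x₀ with hδ
  have δpos : 0 < δ := by
    have hx : x₀ ∈ ⋃ i, U i := hcover ▸ Set.mem_univ x₀
    obtain ⟨i₀, hi₀⟩ := Set.mem_iUnion.1 hx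
    calc (0:ℝ) < f i₀ x₀ := fpos i₀ x₀ hi₀
      _ ≤ S x₀ := Finset.single_le_sum (fun i _ => fnonneg i x₀) (Finset.mem_univ i₀)
  -- pair witnesses
  set c : I × I → ℝ := fun p =>
    if h : (U p.1 ∩ U p.2).Nonempty then min (f p.1 h.choose) (f p.2 h.choose) else 1 with hc
  have cpos : ∀ p, 0 < c p := by
    intro p
    by_cases h : (U p.1 ∩ U p.2).Nonempty
    · simp only [hc, dif_pos h]
      exact lt_min (fpos _ _ h.choose_spec.1) (fpos _ _ h.choose_spec.2)
    · simp only [hc, dif_neg h]; exact one_pos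
  have hIne : (Finset.univ : Finset (I × I)).Nonempty := Finset.univ_nonempty
  set E : ℝ := Finset.univ.inf' hIne c with hE
  have Epos : 0 < E := (Finset.lt_inf'_iff hIne).2 fun p _ => cpos p
  set n : ℕ := Fintype.card I with hn
  have npos : (0:ℝ) < n := by
    have := Fintype.card_pos_iff.2 hI
    exact_mod_cast this
  set ε : ℝ := min (δ / (2 * n)) (E / 2) with hε
  have εpos : 0 < ε := lt_min (by positivity) (by positivity)
  have εltE : ε < E := lt_of_le_of_lt (min_le_right _ _) (by linarith)
  refine ⟨fun i => {x | ε < f i x}, ?_, ?_, ?_, ?_, ?_⟩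
  · intro i
    exact isOpen_Ioi.preimage (fcont i)
  · intro i
    have hcl : closure {x | ε < f i x} ⊆ {x | ε ≤ f i x} :=
      closure_minimal (fun x (hx : ε < f i x) => le_of_lt hx) (isClosed_Ici.preimage (fcont i))
    exact fun x hx => fmem i x (lt_of_lt_of_le εpos (hcl hx))
  · ext x
    simp only [Set.mem_iUnion, Set.mem_univ, iff_true, Set.mem_setOf_eq]
    by_contra hall
    push_neg at hall
    have h1 : S x ≤ n * ε := by
      have := Finset.sum_le_card_nsmul Finset.univ (fun i => f i x) ε (fun i _ => hall i)
      simpa [nsmul_eq_mul] using this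
    have h2 : ε ≤ δ / (2 * n) := min_le_left _ _
    have h3 : δ ≤ S x := hx₀ x (Set.mem_univ x)
    have h4 : n * ε ≤ δ / 2 := by
      rw [div_mul_eq_div_div] at h2
      calc (n:ℝ) * ε ≤ n * (δ / 2 / n) := by nlinarith
        _ = δ / 2 := by field_simp
    linarith
  · intro i j
    constructor
    · intro hUij
      have hcij : c (i, j) = min (f i hUij.choose) (f j hUij.choose) := dif_pos hUij
      have hle : E ≤ c (i, j) := Finset.inf'_le c (Finset.mem_univ _)
      rw [hcij] at hle
      exact ⟨hUij.choose, lt_of_lt_of_le εltE (hle.trans (min_le_left _ _)),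
        lt_of_lt_of_le εltE (hle.trans (min_le_right _ _))⟩
    · rintro ⟨x, hxi, hxj⟩
      exact ⟨x, fmem i x (εpos.trans hxi), fmem j x (εpos.trans hxj)⟩
  · intro i j hdisj
    by_contra hne
    rw [← Ne, ← Set.nonempty_iff_ne_empty] at hne
    obtain ⟨x, hxi, hxj⟩ := hne
    have hcl : ∀ k, closure {y | ε < f k y} ⊆ {y | ε ≤ f k y} := fun k =>
      closure_minimal (fun y (hy : ε < f k y) => le_of_lt hy) (isClosed_Ici.preimage (fcont k))
    have hxUi : x ∈ U i := fmem i x (lt_of_lt_of_le εpos (hcl i hxi))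
    have hxUj : x ∈ U j := fmem j x (lt_of_lt_of_le εpos (hcl j hxj))
    have hUij : (U i ∩ U j).Nonempty := ⟨x, hxUi, hxUj⟩
    have hcij : c (i, j) = min (f i hUij.choose) (f j hUij.choose) := dif_pos hUij
    have hle : E ≤ c (i, j) := Finset.inf'_le c (Finset.mem_univ _)
    rw [hcij] at hle
    have : hUij.choose ∈ ({y | ε < f i y} ∩ {y | ε < f j y} : Set X) :=
      ⟨lt_of_lt_of_le εltE (hle.trans (min_le_left _ _)),
       lt_of_lt_of_le εltE (hle.trans (min_le_right _ _))⟩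
    rw [hdisj] at this
    exact this
end

section
/- Let U ⊆ ℝⁿ and V ⊆ ℝᵈ be open sets with 0 ∈ V, and let f : U → ℝᵏ and g : U × V → ℝˡ be differentiable maps. Assume: (i) for all (x, y) ∈ U × V, g(x, y) = 0 if and only if y = 0; and (ii) for every x ∈ U with f(x) = 0, the derivative of f at x is surjective onto ℝᵏ and the (total) derivative of g at (x, 0) is surjective onto ℝˡ. Define h : U × V → ℝᵏ × ℝˡ by h(x, y) = (f(x), g(x, y)). Then at every (x, y) ∈ U × V with h(x, y) = 0, the derivative of h at (x, y) is a surjective linear map ℝⁿ × ℝᵈ → ℝᵏ × ℝˡ. -/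
/-- Local form of "lifted perturbations are automatically transverse": if `g(x,y) = 0` iff
`y = 0` on `U × V`, and at every zero `x` of `f` both `Df(x)` and the total derivative
`Dg(x,0)` are surjective, then the combined map `h(x,y) = (f x, g(x,y))` has surjective
derivative at every zero of `h` in `U × V`. -/
theorem stmt_9 {n d k l : ℕ}
    (U : Set (Fin n → ℝ)) (hU : IsOpen U)
    (V : Set (Fin d → ℝ)) (hV : IsOpen V) (h0V : (0 : Fin d → ℝ) ∈ V)
    (f : (Fin n → ℝ) → (Fin k → ℝ))
    (g : (Fin n → ℝ) × (Fin d → ℝ) → (Fin l → ℝ))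
    (hf : ∀ x ∈ U, DifferentiableAt ℝ f x)
    (hg : ∀ p ∈ U ×ˢ V, DifferentiableAt ℝ g p)
    (hzero : ∀ x ∈ U, ∀ y ∈ V, (g (x, y) = 0 ↔ y = 0))
    (htrans : ∀ x ∈ U, f x = 0 →
      Function.Surjective (fderiv ℝ f x) ∧ Function.Surjective (fderiv ℝ g (x, 0))) :
    ∀ x ∈ U, ∀ y ∈ V,
      (fun p : (Fin n → ℝ) × (Fin d → ℝ) => (f p.1, g p)) (x, y) = 0 →
        Function.Surjective
          (fderiv ℝ (fun p : (Fin n → ℝ) × (Fin d → ℝ) => (f p.1, g p)) (x, y)) := by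
  intro x hx y hy hz
  have hfx : f x = 0 := congrArg Prod.fst hz
  have hgxy : g (x, y) = 0 := congrArg Prod.snd hz
  have hy0 : y = 0 := (hzero x hx y hy).mp hgxy
  subst hy0
  have hxU : (x, (0 : Fin d → ℝ)) ∈ U ×ˢ V := ⟨hx, h0V⟩
  set A := fderiv ℝ f x with hA
  set B := fderiv ℝ g (x, 0) with hB
  -- derivative of h
  have hfd : HasFDerivAt (fun p : (Fin n → ℝ) × (Fin d → ℝ) => (f p.1, g p))
      ((A.comp (ContinuousLinearMap.fst ℝ _ _)).prod B) (x, 0) := by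
    exact HasFDerivAt.prodMk
      (((hf x hx).hasFDerivAt).comp (x, 0)
        (ContinuousLinearMap.fst ℝ (Fin n → ℝ) (Fin d → ℝ)).hasFDerivAt)
      ((hg _ hxU).hasFDerivAt)
  rw [hfd.fderiv]
  obtain ⟨hAsurj, hBsurj⟩ := htrans x hx hfx
  -- B vanishes on the first factor
  have hB0 : ∀ u : Fin n → ℝ, B (u, 0) = 0 := by
    have h1 : HasFDerivAt (fun x' => g (x', 0))
        (B.comp (ContinuousLinearMap.inl ℝ (Fin n → ℝ) (Fin d → ℝ))) x :=
      ((hg _ hxU).hasFDerivAt).comp x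
        (ContinuousLinearMap.inl ℝ (Fin n → ℝ) (Fin d → ℝ)).hasFDerivAt
    have h2 : (fun x' => g (x', 0)) =ᶠ[nhds x] fun _ => (0 : Fin l → ℝ) := by
      filter_upwards [hU.mem_nhds hx] with x' hx'
      exact (hzero x' hx' 0 h0V).mpr rfl
    have h3 : HasFDerivAt (fun x' => g (x', 0)) (0 : (Fin n → ℝ) →L[ℝ] (Fin l → ℝ)) x := by
      have : HasFDerivAt (fun _ : Fin n → ℝ => (0 : Fin l → ℝ))
          (0 : (Fin n → ℝ) →L[ℝ] (Fin l → ℝ)) x := hasFDerivAt_const _ _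
      exact this.congr_of_eventuallyEq h2
    have h4 := h3.unique h1
    intro u
    have := congrFun (congrArg (DFunLike.coe) h4) u
    simpa using this.symm
  rintro ⟨a, b⟩
  obtain ⟨u₁, hu₁⟩ := hAsurj a
  obtain ⟨⟨w₁, w₂⟩, hw⟩ := hBsurj b
  refine ⟨(u₁, w₂), ?_⟩
  have hsplit : ∀ v₁ v₂, B (v₁, v₂) = B (0, v₂) := by
    intro v₁ v₂
    have : ((v₁, v₂) : (Fin n → ℝ) × (Fin d → ℝ)) = (v₁, 0) + (0, v₂) := by
      simp [Prod.ext_iff]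
    rw [this, map_add, hB0]
    simp
  simp only [ContinuousLinearMap.prod_apply, ContinuousLinearMap.comp_apply,
    ContinuousLinearMap.coe_fst', Prod.mk.injEq]
  refine ⟨hu₁, ?_⟩
  rw [hsplit u₁ w₂, ← hsplit w₁ w₂, hw]
end

section
/- Let U ⊆ ℝⁿ be open, x₀ ∈ U, and let s : U → ℝᵏ and t₁, …, t_m : U → ℝᵏ be differentiable at x₀. Define F : U × ℝᵐ → ℝᵏ by F(x, a) = s(x) + Σ_{j=1}^{m} a_j • t_j(x). If the range of the derivative of s at x₀ together with the linear span of { t₁(x₀), …, t_m(x₀) } is all of ℝᵏ, then the derivative of F at (x₀, 0) is a surjective linear map ℝⁿ × ℝᵐ → ℝᵏ. -/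
/-!
At `a = 0` the product rule kills the terms `a j • D(t j)(x₀)`, so the derivative of
`F(x, a) = s x + ∑ j, a j • t j x` at `(x₀, 0)` is `(h, b) ↦ Ds(x₀) h + ∑ j, b j • t j x₀`.
Its range is therefore `range Ds(x₀) ⊔ span {t j x₀}`, which is everything by assumption.
-/

open ContinuousLinearMap

section

variable {𝕜 E F ι : Type*} [NontriviallyNormedField 𝕜] [NormedAddCommGroup E] [NormedSpace 𝕜 E]
  [NormedAddCommGroup F] [NormedSpace 𝕜 F] [Fintype ι]

noncomputable def linearCombinationCLM (v : ι → F) : (ι → 𝕜) →L[𝕜] F :=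
  ∑ j, (proj j : (ι → 𝕜) →L[𝕜] 𝕜).smulRight (v j)

theorem linearCombinationCLM_apply (v : ι → F) (a : ι → 𝕜) :
    linearCombinationCLM v a = ∑ j, a j • v j := by
  simp [linearCombinationCLM]

theorem range_linearCombinationCLM (v : ι → F) :
    LinearMap.range (linearCombinationCLM (𝕜 := 𝕜) v).toLinearMap =
      Submodule.span 𝕜 (Set.range v) := by
  rw [← Fintype.range_linearCombination]
  congr 1
  ext a
  simp [linearCombinationCLM_apply, Fintype.linearCombination_apply]

theorem hasFDerivAt_add_sum_smul_zero {s : E → F} {t : ι → E → F} {x₀ : E}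
    (hs : DifferentiableAt 𝕜 s x₀) (ht : ∀ j, DifferentiableAt 𝕜 (t j) x₀) :
    HasFDerivAt (fun p : E × (ι → 𝕜) => s p.1 + ∑ j, p.2 j • t j p.1)
      ((fderiv 𝕜 s x₀).coprod (linearCombinationCLM fun j => t j x₀)) (x₀, 0) := by
  have hs' : HasFDerivAt (fun p : E × (ι → 𝕜) => s p.1) _ (x₀, 0) :=
    hs.hasFDerivAt.comp _ hasFDerivAt_fst
  have ht' (j : ι) : HasFDerivAt (fun p : E × (ι → 𝕜) => p.2 j • t j p.1) _ (x₀, 0) :=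
    ((proj j).comp (snd 𝕜 E (ι → 𝕜))).hasFDerivAt.smul ((ht j).hasFDerivAt.comp _ hasFDerivAt_fst)
  refine (hs'.fun_add (HasFDerivAt.fun_sum fun j _ => ht' j)).congr_fderiv ?_
  ext p <;> simp [linearCombinationCLM_apply]

end

theorem stmt_13_general {n m k : ℕ}
    (x₀ : Fin n → ℝ)
    (s : (Fin n → ℝ) → (Fin k → ℝ)) (t : Fin m → (Fin n → ℝ) → (Fin k → ℝ))
    (hs : DifferentiableAt ℝ s x₀) (ht : ∀ j, DifferentiableAt ℝ (t j) x₀)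
    (hspan :
      LinearMap.range (fderiv ℝ s x₀).toLinearMap ⊔ Submodule.span ℝ (Set.range fun j => t j x₀) = ⊤) :
    Function.Surjective
      (fderiv ℝ
        (fun p : (Fin n → ℝ) × (Fin m → ℝ) => s p.1 + ∑ j, p.2 j • t j p.1)
        ((x₀, 0) : (Fin n → ℝ) × (Fin m → ℝ))) := by
  rw [(hasFDerivAt_add_sum_smul_zero hs ht).fderiv, ← coe_coe, ← LinearMap.range_eq_top,
    range_coprod, range_linearCombinationCLM, hspan]

/-- Parametric transversality step: if the range of `Ds(x₀)` together with the span of the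
values `t j x₀` is all of `ℝᵏ`, then `F(x, a) = s x + Σ j, a j • t j x` has surjective
derivative at `(x₀, 0)`. -/
theorem stmt_13 {n m k : ℕ}
    (U : Set (Fin n → ℝ)) (hU : IsOpen U) (x₀ : Fin n → ℝ) (hx₀ : x₀ ∈ U)
    (s : (Fin n → ℝ) → (Fin k → ℝ)) (t : Fin m → (Fin n → ℝ) → (Fin k → ℝ))
    (hs : DifferentiableAt ℝ s x₀) (ht : ∀ j, DifferentiableAt ℝ (t j) x₀)
    (hspan :
      LinearMap.range (fderiv ℝ s x₀).toLinearMap ⊔ Submodule.span ℝ (Set.range fun j => t j x₀) = ⊤) :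
    Function.Surjective
      (fderiv ℝ
        (fun p : (Fin n → ℝ) × (Fin m → ℝ) => s p.1 + ∑ j, p.2 j • t j p.1)
        ((x₀, 0) : (Fin n → ℝ) × (Fin m → ℝ))) :=
  stmt_13_general x₀ s t hs ht hspan
end
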